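/- arXiv:math/0405203 — 10 statements merged into one kernel-verified Lean document; each statement's English description precedes it below -/
import Mathlib

section
/- For every pair of coprime integers p > q ≥ 1 there exist an integer k ≥ 1 and integers n_1, …, n_k with n_j ≤ −2 for all j such that the negative continued fraction [n_1, …, n_k] equals −p/q. -/
/-- Negative continued fraction `[n_1, …, n_k] = n_1 - 1/[n_2, …, n_k]`,
with `ncf [n_k] = n_k` (note `1/0 = 0` in Lean, so the base case is correct). -/
def ncf : List ℤ → ℚ
  | [] => 0
  | n :: l => (n : ℚ) - 1 / ncf l

lemma ncf_aux : ∀ qn : ℕ, ∀ p q : ℤ, 1 ≤ q → q < p → IsCoprime p q → q.toNat = qn →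
    ∃ l : List ℤ, l ≠ [] ∧ (∀ m ∈ l, m ≤ -2) ∧ ncf l = -(p : ℚ) / q := by
  intro qn
  induction qn using Nat.strong_induction_on with
  | _ qn ih =>
    intro p q hq hpq hcop hqn
    rcases eq_or_lt_of_le hq with h1 | h2
    · refine ⟨[-p], by simp, ?_, ?_⟩
      · intro m hm; simp at hm; omega
      · simp [ncf, ← h1]
    · -- q ≥ 2
      have hq0 : 0 < q := by omega
      have hmod := Int.emod_nonneg p (by omega : q ≠ 0)
      have hmod2 := Int.emod_lt_of_pos p hq0
      have hdm := Int.mul_ediv_add_emod p q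
      have hr0ne : p % q ≠ 0 := by
        intro h
        have hdvd : q ∣ p := Int.dvd_of_emod_eq_zero h
        have : IsUnit q := hcop.isUnit_of_dvd' hdvd dvd_rfl
        have := Int.isUnit_iff.mp this
        omega
      set a : ℤ := p / q + 1 with ha
      set r : ℤ := q - p % q with hrdef
      have haq : a * q = q * (p / q) + q := by rw [ha]; ring
      have har : p = a * q - r := by omega
      have hr1 : 1 ≤ r := by omega
      have hrq : r < q := by omega
      have ha2 : 2 ≤ a := by nlinarith [har]
      have hcop' : IsCoprime q r := by
        have h := (hcop.symm.neg_right).add_mul_left_right a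
        have : -p + q * a = r := by linear_combination -har
        rwa [this] at h
      obtain ⟨l', hne, hall, hval⟩ :=
        ih r.toNat (by omega) q r hr1 hrq hcop' rfl
      refine ⟨(-a) :: l', by simp, ?_, ?_⟩
      · intro m hm
        rcases List.mem_cons.mp hm with h | h
        · omega
        · exact hall m h
      · have hqQ : (q : ℚ) ≠ 0 := Int.cast_ne_zero.mpr (by omega)
        have hrQ : (r : ℚ) ≠ 0 := Int.cast_ne_zero.mpr (by omega)
        have key : (p : ℚ) = a * q - r := by exact_mod_cast har
        show ((-a : ℤ) : ℚ) - 1 / ncf l' = -(p : ℚ) / q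
        rw [hval]
        push_cast
        rw [one_div_div, div_neg, sub_neg_eq_add]
        field_simp
        linear_combination key

/-- For every pair of coprime integers `p > q ≥ 1` there exist `k ≥ 1` and integers
`n_1, …, n_k` with `n_j ≤ -2` such that `[n_1, …, n_k] = -p/q`. -/
theorem exists_negative_continued_fraction_expansion
    (p q : ℤ) (hq : 1 ≤ q) (hpq : q < p) (hcop : IsCoprime p q) :
    ∃ (k : ℕ) (n : ℕ → ℤ), 1 ≤ k ∧ (∀ j, 1 ≤ j → j ≤ k → n j ≤ -2) ∧
      ncf ((List.range k).map fun i => n (i + 1)) = -(p : ℚ) / (q : ℚ) := by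
  obtain ⟨l, hne, hall, hval⟩ := ncf_aux q.toNat p q hq hpq hcop rfl
  refine ⟨l.length, fun j => l.getD (j - 1) (-2), ?_, ?_, ?_⟩
  · have := List.length_pos_iff.mpr hne; omega
  · intro j hj1 hjk
    have hlt : j - 1 < l.length := by omega
    show l.getD (j - 1) (-2) ≤ -2
    rw [List.getD_eq_getElem l (-2) hlt]
    exact hall _ (List.getElem_mem hlt)
  · have hmap : ((List.range l.length).map fun i => l.getD (i + 1 - 1) (-2)) = l := by
      apply List.ext_getElem
      · simp
      · intro i h1 h2
        simp only [List.getElem_map, List.getElem_range]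
        rw [Nat.add_sub_cancel, List.getD_eq_getElem l (-2) h2]
    rw [hmap, hval]
end

section
/- The negative continued fraction expansion with all entries ≤ −2 is unique: if k, l ≥ 1 and n_1, …, n_k and m_1, …, m_l are integers with all n_i ≤ −2 and all m_i ≤ −2, and [n_1, …, n_k] = [m_1, …, m_l], then k = l and n_j = m_j for all j. -/
lemma ncf_lt_neg_one : ∀ L : List ℤ, L ≠ [] → (∀ x ∈ L, x ≤ -2) → ncf L < -1 := by
  intro L
  induction L with
  | nil => intro h; exact absurd rfl h
  | cons n l ih =>
    intro _ hb
    have hn : (n : ℚ) ≤ -2 := by exact_mod_cast hb n (by simp)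
    rcases eq_or_ne l [] with rfl | hl
    · simpa [ncf] using hn.trans_lt (by norm_num)
    · have hlt : ncf l < -1 := ih hl (fun x hx => hb x (by simp [hx]))
      have h0 : ncf l < 0 := hlt.trans (by norm_num)
      have h1 : -1 < 1 / ncf l := by
        rw [lt_div_iff_of_neg h0]; linarith
      show (n : ℚ) - 1 / ncf l < -1
      linarith

lemma ncf_bounds (n : ℤ) (l : List ℤ) (hb : ∀ x ∈ l, x ≤ -2) :
    (n : ℚ) ≤ ncf (n :: l) ∧ ncf (n :: l) < n + 1 := by
  rcases eq_or_ne l [] with rfl | hl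
  · simp [ncf]
  · have hlt : ncf l < -1 := ncf_lt_neg_one l hl hb
    have h0 : ncf l < 0 := hlt.trans (by norm_num)
    have h1 : -1 < 1 / ncf l := by rw [lt_div_iff_of_neg h0]; linarith
    have h2 : 1 / ncf l < 0 := div_neg_of_pos_of_neg one_pos h0
    constructor
    · show (n : ℚ) ≤ (n : ℚ) - 1 / ncf l; linarith
    · show (n : ℚ) - 1 / ncf l < n + 1; linarith

lemma ncf_floor (n : ℤ) (l : List ℤ) (hb : ∀ x ∈ l, x ≤ -2) :
    ⌊ncf (n :: l)⌋ = n := by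
  obtain ⟨hlo, hhi⟩ := ncf_bounds n l hb
  exact Int.floor_eq_iff.mpr ⟨hlo, by exact_mod_cast hhi⟩

/-- Uniqueness of the negative continued fraction expansion with all entries `≤ -2`:
two nonempty lists of integers, all entries `≤ -2`, with the same negative continued
fraction value are equal (same length and same entries). -/
theorem negative_continued_fraction_unique
    (L₁ L₂ : List ℤ) (h₁ : L₁ ≠ []) (h₂ : L₂ ≠ [])
    (hn₁ : ∀ x ∈ L₁, x ≤ -2) (hn₂ : ∀ x ∈ L₂, x ≤ -2)
    (h : ncf L₁ = ncf L₂) : L₁ = L₂ := by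
  induction L₁ generalizing L₂ with
  | nil => exact absurd rfl h₁
  | cons n l₁ ih =>
    rcases L₂ with _ | ⟨m, l₂⟩
    · exact absurd rfl h₂
    have hbl₁ : ∀ x ∈ l₁, x ≤ -2 := fun x hx => hn₁ x (by simp [hx])
    have hbl₂ : ∀ x ∈ l₂, x ≤ -2 := fun x hx => hn₂ x (by simp [hx])
    have hnm : n = m := by
      have := ncf_floor n l₁ hbl₁
      rw [h, ncf_floor m l₂ hbl₂] at this
      exact this.symm
    subst hnm
    have htail : 1 / ncf l₁ = 1 / ncf l₂ := by
      have h' : (n : ℚ) - 1 / ncf l₁ = (n : ℚ) - 1 / ncf l₂ := h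
      linarith
    rcases eq_or_ne l₁ [] with rfl | hl₁
    · rcases eq_or_ne l₂ [] with rfl | hl₂
      · rfl
      · exfalso
        have hlt : ncf l₂ < -1 := ncf_lt_neg_one l₂ hl₂ hbl₂
        have : 1 / ncf l₂ ≠ 0 := one_div_ne_zero (by linarith)
        have hz : ncf l₂ = 0 := by simpa [ncf] using htail.symm
        linarith
    · rcases eq_or_ne l₂ [] with rfl | hl₂
      · exfalso
        have hlt : ncf l₁ < -1 := ncf_lt_neg_one l₁ hl₁ hbl₁
        have : 1 / ncf l₁ ≠ 0 := one_div_ne_zero (by linarith)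
        have hz : ncf l₁ = 0 := by simpa [ncf] using htail
        linarith
      · have : ncf l₁ = ncf l₂ := by
          rw [one_div, one_div] at htail
          exact inv_injective htail
        rw [ih l₂ hl₁ hl₂ hbl₁ hbl₂ this]
end

section
/- If p > q ≥ 1 are coprime integers and [n_1, …, n_k] = −p/q, then q_k = q and q_{k+1} = p. -/
/-- The first column of `∏ [[-aᵢ, -1], [1, 0]]` over the entries `aᵢ` of the list. -/
def negContinuant : List ℤ → ℤ × ℤ
  | [] => (1, 0)
  | a :: l => (-a * (negContinuant l).1 - (negContinuant l).2, (negContinuant l).1)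

lemma isCoprime_negContinuant :
    ∀ l : List ℤ, IsCoprime (negContinuant l).1 (negContinuant l).2
  | [] => isCoprime_one_left
  | a :: l => by
      obtain ⟨u, v, h⟩ := isCoprime_negContinuant l
      exact ⟨-v, u - a * v, by simp only [negContinuant]; linear_combination h⟩

lemma negContinuant_snd_nonneg_lt_fst :
    ∀ l : List ℤ, (∀ a ∈ l, a ≤ -2) →
      0 ≤ (negContinuant l).2 ∧ (negContinuant l).2 < (negContinuant l).1
  | [], _ => by simp [negContinuant]
  | a :: l, hl => by
      obtain ⟨hR, hRP⟩ := negContinuant_snd_nonneg_lt_fst l fun b hb => hl b (.tail a hb)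
      have ha : a ≤ -2 := hl a List.mem_cons_self
      simp only [negContinuant]
      constructor <;> nlinarith

lemma ncf_eq_neg_div_negContinuant :
    ∀ l : List ℤ, (∀ a ∈ l, a ≤ -2) →
      ncf l = -((negContinuant l).1 : ℚ) / (negContinuant l).2
  | [], _ => by simp [ncf, negContinuant]
  | a :: l, hl => by
      have htail : ∀ b ∈ l, b ≤ -2 := fun b hb => hl b (.tail a hb)
      have hP : ((negContinuant l).1 : ℚ) ≠ 0 := by
        have := negContinuant_snd_nonneg_lt_fst l htail
        exact_mod_cast (by omega : (negContinuant l).1 ≠ 0)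
      simp only [ncf, negContinuant, ncf_eq_neg_div_negContinuant l htail]
      push_cast
      field_simp
      ring

/-- The list here is the last `j` entries `[n_{k-j+1}, …, n_k]`. -/
lemma negContinuant_eq_of_rec (k : ℕ) (n Q : ℕ → ℤ) (hQ0 : Q 0 = 0) (hQ1 : Q 1 = 1)
    (hQ : ∀ j, 1 ≤ j → j ≤ k → Q (j + 1) = -Q (j - 1) - n (k + 1 - j) * Q j) :
    ∀ j ≤ k, negContinuant ((List.range j).map fun i => n (k - j + i + 1)) = (Q (j + 1), Q j)
  | 0, _ => by simp [negContinuant, hQ0, hQ1]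
  | j + 1, hj => by
      have ih := negContinuant_eq_of_rec k n Q hQ0 hQ1 hQ j (by omega)
      have hidx : ∀ i, k - (j + 1) + (i + 1) + 1 = k - j + i + 1 := by omega
      rw [List.range_succ_eq_map, List.map_cons, List.map_map]
      simp only [Function.comp_def, hidx, negContinuant, ih, Prod.mk.injEq, and_true]
      rw [hQ (j + 1) (by omega) hj, Nat.add_sub_cancel,
        show k + 1 - (j + 1) = k - (j + 1) + 0 + 1 by omega]
      ring

theorem qseq_last_terms_general
    (k : ℕ) (n : ℕ → ℤ) (hn : ∀ j, 1 ≤ j → j ≤ k → n j ≤ -2)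
    (Q : ℕ → ℤ) (hQ0 : Q 0 = 0) (hQ1 : Q 1 = 1)
    (hQ : ∀ j, 1 ≤ j → j ≤ k → Q (j + 1) = -Q (j - 1) - n (k + 1 - j) * Q j)
    (p q : ℤ) (hq : 1 ≤ q) (hpq : q < p) (hcop : IsCoprime p q)
    (hncf : ncf ((List.range k).map fun i => n (i + 1)) = -(p : ℚ) / (q : ℚ)) :
    Q k = q ∧ Q (k + 1) = p := by
  set L := (List.range k).map fun i => n (i + 1)
  have hL : negContinuant L = (Q (k + 1), Q k) := by
    simpa using negContinuant_eq_of_rec k n Q hQ0 hQ1 hQ k le_rfl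
  have hentries : ∀ a ∈ L, a ≤ -2 := by
    simp only [L, List.mem_map, List.mem_range]
    rintro _ ⟨i, hi, rfl⟩
    exact hn (i + 1) (by omega) (by omega)
  have hratio : (Q (k + 1) : ℚ) / Q k = p / q := by
    have h := ncf_eq_neg_div_negContinuant L hentries
    rw [hncf, hL, neg_div, neg_div, neg_inj] at h
    exact h.symm
  have hQk : 0 < Q k := by
    have hnonneg : 0 ≤ Q k := by simpa [hL] using (negContinuant_snd_nonneg_lt_fst L hentries).1
    refine hnonneg.lt_of_ne fun h0 => ?_
    rw [← h0, Int.cast_zero, div_zero, eq_comm, div_eq_zero_iff] at hratio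
    norm_cast at hratio
    omega
  have hcopQ := isCoprime_negContinuant L
  rw [hL] at hcopQ
  exact (Rat.div_int_inj hQk (by omega) (Int.isCoprime_iff_gcd_eq_one.mp hcopQ)
    (Int.isCoprime_iff_gcd_eq_one.mp hcop) hratio).symm

/-- With `Q 0 = 0`, `Q 1 = 1` and `Q (j+1) = -Q (j-1) - n (k+1-j) * Q j` for
`j = 1, …, k` (entries `n_j ≤ -2`): if `p > q ≥ 1` are coprime integers and
`[n_1, …, n_k] = -p/q`, then `Q k = q` and `Q (k+1) = p`. -/
theorem qseq_last_terms
    (k : ℕ) (hk : 1 ≤ k) (n : ℕ → ℤ) (hn : ∀ j, 1 ≤ j → j ≤ k → n j ≤ -2)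
    (Q : ℕ → ℤ) (hQ0 : Q 0 = 0) (hQ1 : Q 1 = 1)
    (hQ : ∀ j, 1 ≤ j → j ≤ k → Q (j + 1) = -Q (j - 1) - n (k + 1 - j) * Q j)
    (p q : ℤ) (hq : 1 ≤ q) (hpq : q < p) (hcop : IsCoprime p q)
    (hncf : ncf ((List.range k).map fun i => n (i + 1)) = -(p : ℚ) / (q : ℚ)) :
    Q k = q ∧ Q (k + 1) = p :=
  qseq_last_terms_general k n hn Q hQ0 hQ1 hQ p q hq hpq hcop hncf
end

section
/- Let r_1, …, r_k be integers with |r_j| ≤ −n_j − 2 for all j. Then for every m with 1 ≤ m ≤ k one has |∑_{j=m}^{k} r_j·q_{k+1−j}| ≤ q_{k+2−m} − q_{k+1−m} − 1; in particular this sum has absolute value strictly less than q_{k+2−m}. -/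
/-- With `Q 0 = 0`, `Q 1 = 1` and `Q (j+1) = -Q (j-1) - n (k+1-j) * Q j` for
`j = 1, …, k` (entries `n_j ≤ -2`), and integers `r_j` with `|r_j| ≤ -n_j - 2`:
for every `1 ≤ m ≤ k`, `|∑_{j=m}^{k} r_j * Q (k+1-j)| ≤ Q (k+2-m) - Q (k+1-m) - 1`;
in particular this sum has absolute value strictly less than `Q (k+2-m)`. -/
theorem qseq_weighted_sum_bound
    (k : ℕ) (hk : 1 ≤ k) (n : ℕ → ℤ) (hn : ∀ j, 1 ≤ j → j ≤ k → n j ≤ -2)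
    (Q : ℕ → ℤ) (hQ0 : Q 0 = 0) (hQ1 : Q 1 = 1)
    (hQ : ∀ j, 1 ≤ j → j ≤ k → Q (j + 1) = -Q (j - 1) - n (k + 1 - j) * Q j)
    (r : ℕ → ℤ) (hr : ∀ j, 1 ≤ j → j ≤ k → |r j| ≤ -n j - 2) :
    ∀ m, 1 ≤ m → m ≤ k →
      |∑ j ∈ Finset.Icc m k, r j * Q (k + 1 - j)| ≤ Q (k + 2 - m) - Q (k + 1 - m) - 1 ∧
        |∑ j ∈ Finset.Icc m k, r j * Q (k + 1 - j)| < Q (k + 2 - m) := by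
  -- monotonicity / nonnegativity of Q
  have hmono : ∀ j, j ≤ k → 0 ≤ Q j ∧ Q j + 1 ≤ Q (j + 1) := by
    intro j
    induction j with
    | zero => intro _; simp [hQ0, hQ1]
    | succ j ih =>
      intro hjk
      obtain ⟨h0, h1⟩ := ih (by omega)
      have hq : Q (j + 2) = -Q j - n (k - j) * Q (j + 1) := by
        have h := hQ (j + 1) (by omega) hjk
        have e1 : j + 1 - 1 = j := by omega
        have e2 : k + 1 - (j + 1) = k - j := by omega
        rw [e1, e2] at h
        exact h
      have hn' : n (k - j) ≤ -2 := hn (k - j) (by omega) (by omega)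
      have hQ1pos : 0 ≤ Q (j + 1) := by linarith
      refine ⟨hQ1pos, ?_⟩
      have : 2 * Q (j + 1) ≤ (-n (k - j)) * Q (j + 1) := by nlinarith
      have e3 : j + 1 + 1 = j + 2 := by omega
      rw [e3]
      linarith
  suffices H : ∀ t m, 1 ≤ m → m ≤ k → k - m = t →
      |∑ j ∈ Finset.Icc m k, r j * Q (k + 1 - j)| ≤ Q (k + 2 - m) - Q (k + 1 - m) - 1 ∧
        |∑ j ∈ Finset.Icc m k, r j * Q (k + 1 - j)| < Q (k + 2 - m) by
    intro m h1 h2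
    exact H (k - m) m h1 h2 rfl
  intro t
  induction t with
  | zero =>
    intro m h1 h2 ht
    have hm : m = k := by omega
    subst hm
    have e1 : m + 1 - m = 1 := by omega
    have e2 : m + 2 - m = 2 := by omega
    have hq2 : Q 2 = -n m := by
      have h := hQ 1 le_rfl hk
      simp [hQ0, hQ1] at h
      exact h
    have hrk := hr m hk le_rfl
    have habs : 0 ≤ |r m| := abs_nonneg _
    rw [Finset.Icc_self, Finset.sum_singleton, e1, e2, hQ1, mul_one, hq2]
    constructor <;> linarith
  | succ t ih =>
    intro m h1 h2 ht
    have hmk : m < k := by omega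
    obtain ⟨ihle, _⟩ := ih (m + 1) (by omega) (by omega) (by omega)
    -- split the sum at the bottom
    have hsplit : ∑ j ∈ Finset.Icc m k, r j * Q (k + 1 - j)
        = r m * Q (k + 1 - m) + ∑ j ∈ Finset.Icc (m + 1) k, r j * Q (k + 1 - j) := by
      rw [Finset.Icc_eq_cons_Ioc (le_of_lt hmk), Finset.sum_cons, Finset.Icc_add_one_left_eq_Ioc]
    have e1 : k + 2 - (m + 1) = k + 1 - m := by omega
    have e2 : k + 1 - (m + 1) = k - m := by omega
    rw [e1, e2] at ihle
    have key : Q (k + 2 - m) = -Q (k - m) - n m * Q (k + 1 - m) := by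
      have h := hQ (k + 1 - m) (by omega) (by omega)
      have e3 : k + 1 - m + 1 = k + 2 - m := by omega
      have e4 : k + 1 - m - 1 = k - m := by omega
      have e5 : k + 1 - (k + 1 - m) = m := by omega
      rw [e3, e4, e5] at h
      exact h
    have hQpos : 0 ≤ Q (k + 1 - m) := (hmono (k + 1 - m) (by omega)).1
    have hrm := hr m h1 (by omega)
    have hbound : |r m * Q (k + 1 - m)| ≤ (-n m - 2) * Q (k + 1 - m) := by
      rw [abs_mul, abs_of_nonneg hQpos]
      exact mul_le_mul_of_nonneg_right hrm hQpos
    have htri : |∑ j ∈ Finset.Icc m k, r j * Q (k + 1 - j)|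
        ≤ |r m * Q (k + 1 - m)| + |∑ j ∈ Finset.Icc (m + 1) k, r j * Q (k + 1 - j)| := by
      rw [hsplit]; exact abs_add_le _ _
    constructor
    · linarith
    · linarith
end

section
/- Let r_1, …, r_k be integers with |r_j| ≤ −n_j − 2 for all j. If q_{k+1} divides ∑_{j=1}^{k} r_j·q_{k+1−j}, then ∑_{j=1}^{k} r_j·q_{k+1−j} = 0. -/
/-- Telescoping identity for second differences. -/
lemma telescope_sum (f : ℕ → ℤ) (m : ℕ) :
    ∑ i ∈ Finset.Icc 1 m, (f (i + 1) + f (i - 1) - 2 * f i)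
      = f (m + 1) - f m - f 1 + f 0 := by
  induction m with
  | zero => simp
  | succ p ih =>
    rw [Finset.sum_Icc_succ_top (by omega : 1 ≤ p + 1), ih]
    simp only [Nat.add_sub_cancel]
    ring

/-- With `Q 0 = 0`, `Q 1 = 1` and `Q (j+1) = -Q (j-1) - n (k+1-j) * Q j` for
`j = 1, …, k` (entries `n_j ≤ -2`), and integers `r_j` with `|r_j| ≤ -n_j - 2`:
if `Q (k+1)` divides `∑_{j=1}^{k} r_j * Q (k+1-j)`, then this sum is zero. -/
theorem qseq_dvd_sum_eq_zero
    (k : ℕ) (hk : 1 ≤ k) (n : ℕ → ℤ) (hn : ∀ j, 1 ≤ j → j ≤ k → n j ≤ -2)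
    (Q : ℕ → ℤ) (hQ0 : Q 0 = 0) (hQ1 : Q 1 = 1)
    (hQ : ∀ j, 1 ≤ j → j ≤ k → Q (j + 1) = -Q (j - 1) - n (k + 1 - j) * Q j)
    (r : ℕ → ℤ) (hr : ∀ j, 1 ≤ j → j ≤ k → |r j| ≤ -n j - 2)
    (hdvd : Q (k + 1) ∣ ∑ j ∈ Finset.Icc 1 k, r j * Q (k + 1 - j)) :
    ∑ j ∈ Finset.Icc 1 k, r j * Q (k + 1 - j) = 0 := by
  -- monotonicity / positivity of Q
  have key : ∀ j, j ≤ k → 0 ≤ Q j ∧ Q j + 1 ≤ Q (j + 1) := by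
    intro j
    induction j with
    | zero => intro _; simp [hQ0, hQ1]
    | succ m ih =>
      intro hm
      obtain ⟨h0, h1⟩ := ih (by omega)
      have hrec := hQ (m + 1) (by omega) hm
      have hidx : m + 1 - 1 = m := by omega
      have hidx2 : k + 1 - (m + 1) = k - m := by omega
      rw [hidx, hidx2] at hrec
      have hn' := hn (k - m) (by omega) (by omega)
      constructor
      · linarith
      · nlinarith
  set f : ℕ → ℤ := fun j => Q (k + 1 - j) with hf
  -- telescoping value of the extremal sum
  have hT : ∑ j ∈ Finset.Icc 1 k, (-n j - 2) * Q (k + 1 - j)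
      = Q (k + 1) - Q k - 1 := by
    have hterm : ∀ j ∈ Finset.Icc 1 k,
        (-n j - 2) * Q (k + 1 - j) = f (j + 1) + f (j - 1) - 2 * f j := by
      intro j hj
      rw [Finset.mem_Icc] at hj
      have hrec := hQ (k + 1 - j) (by omega) (by omega)
      have e1 : k + 1 - j - 1 = k + 1 - (j + 1) := by omega
      have e2 : k + 1 - (k + 1 - j) = j := by omega
      have e3 : k + 1 - j + 1 = k + 1 - (j - 1) := by omega
      rw [e1, e2, e3] at hrec
      simp only [hf, hrec]
      ring
    rw [Finset.sum_congr rfl hterm, telescope_sum]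
    have e4 : k + 1 - (k + 1) = 0 := by omega
    have e5 : k + 1 - k = 1 := by omega
    have e6 : k + 1 - 1 = k := by omega
    simp only [hf, e4, e5, e6, hQ0, hQ1, Nat.sub_zero]
    ring
  have hQk0 : 0 ≤ Q k := (key k le_rfl).1
  have hQk1 : 0 < Q (k + 1) := by linarith [(key k le_rfl).2]
  -- bound the sum
  have hbound : |∑ j ∈ Finset.Icc 1 k, r j * Q (k + 1 - j)|
      ≤ Q (k + 1) - Q k - 1 := by
    rw [← hT]
    calc |∑ j ∈ Finset.Icc 1 k, r j * Q (k + 1 - j)|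
        ≤ ∑ j ∈ Finset.Icc 1 k, |r j * Q (k + 1 - j)| :=
          Finset.abs_sum_le_sum_abs _ _
      _ ≤ ∑ j ∈ Finset.Icc 1 k, (-n j - 2) * Q (k + 1 - j) := by
          apply Finset.sum_le_sum
          intro j hj
          rw [Finset.mem_Icc] at hj
          have hQpos : 0 ≤ Q (k + 1 - j) := (key (k + 1 - j) (by omega)).1
          rw [abs_mul, abs_of_nonneg hQpos]
          exact mul_le_mul_of_nonneg_right (hr j hj.1 hj.2) hQpos
  have hlt : |∑ j ∈ Finset.Icc 1 k, r j * Q (k + 1 - j)| < Q (k + 1) := by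
    linarith
  exact Int.eq_zero_of_abs_lt_dvd hdvd hlt
end

section
/- Let r_1, …, r_k be integers with |r_j| ≤ −n_j − 2 for all j, and let m satisfy 1 ≤ m ≤ k. If ∑_{j=m}^{k} r_j·q_{k+1−j} = 0, then r_m = 0 and ∑_{j=m+1}^{k} r_j·q_{k+1−j} = 0. -/
/-- With `Q 0 = 0`, `Q 1 = 1` and `Q (j+1) = -Q (j-1) - n (k+1-j) * Q j` for
`j = 1, …, k` (entries `n_j ≤ -2`), and integers `r_j` with `|r_j| ≤ -n_j - 2`:
if `∑_{j=m}^{k} r_j * Q (k+1-j) = 0` for some `1 ≤ m ≤ k`, then `r m = 0` and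
`∑_{j=m+1}^{k} r_j * Q (k+1-j) = 0`. -/
theorem qseq_sum_zero_step
    (k : ℕ) (hk : 1 ≤ k) (n : ℕ → ℤ) (hn : ∀ j, 1 ≤ j → j ≤ k → n j ≤ -2)
    (Q : ℕ → ℤ) (hQ0 : Q 0 = 0) (hQ1 : Q 1 = 1)
    (hQ : ∀ j, 1 ≤ j → j ≤ k → Q (j + 1) = -Q (j - 1) - n (k + 1 - j) * Q j)
    (r : ℕ → ℤ) (hr : ∀ j, 1 ≤ j → j ≤ k → |r j| ≤ -n j - 2)
    (m : ℕ) (hm1 : 1 ≤ m) (hmk : m ≤ k)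
    (hsum : ∑ j ∈ Finset.Icc m k, r j * Q (k + 1 - j) = 0) :
    r m = 0 ∧ ∑ j ∈ Finset.Icc (m + 1) k, r j * Q (k + 1 - j) = 0 := by
  -- monotonicity / positivity of Q
  have hA : ∀ t, t ≤ k → 0 ≤ Q t ∧ Q t + 1 ≤ Q (t + 1) := by
    intro t
    induction t with
    | zero => intro _; simp [hQ0, hQ1]
    | succ t ih =>
      intro ht
      obtain ⟨h1, h2⟩ := ih (Nat.le_of_succ_le ht)
      have hpos : 0 ≤ Q (t + 1) := by linarith
      refine ⟨hpos, ?_⟩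
      have hrec := hQ (t + 1) (by omega) ht
      have hnle : n (k + 1 - (t + 1)) ≤ -2 := hn _ (by omega) (by omega)
      simp only [Nat.add_sub_cancel] at hrec
      nlinarith
  -- telescoping identity
  have hB : ∀ t, t ≤ k - 1 →
      ∑ j ∈ Finset.Icc (k - t + 1) k, (-n j - 2) * Q (k + 1 - j)
        = Q (t + 1) - Q t - 1 := by
    intro t
    induction t with
    | zero =>
      intro _
      rw [Finset.Icc_eq_empty (by omega)]
      simp [hQ0, hQ1]
    | succ t ih =>
      intro ht
      have hins : Finset.Icc (k - (t + 1) + 1) k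
          = insert (k - t) (Finset.Icc (k - t + 1) k) := by
        ext x; simp only [Finset.mem_Icc, Finset.mem_insert]; omega
      rw [hins, Finset.sum_insert (by simp only [Finset.mem_Icc]; omega),
        ih (by omega)]
      have hidx : k + 1 - (k - t) = t + 1 := by omega
      have hrec := hQ (t + 1) (by omega) (by omega)
      have hidx2 : k + 1 - (t + 1) = k - t := by omega
      rw [hidx2] at hrec
      simp only [Nat.add_sub_cancel] at hrec
      rw [hidx]
      linarith
  -- bound on the tail
  have htk : k - m ≤ k - 1 := by omega
  have hBt := hB (k - m) htk
  have hkm : k - (k - m) + 1 = m + 1 := by omega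
  rw [hkm] at hBt
  have htail : |∑ j ∈ Finset.Icc (m + 1) k, r j * Q (k + 1 - j)|
      ≤ Q (k - m + 1) - Q (k - m) - 1 := by
    calc |∑ j ∈ Finset.Icc (m + 1) k, r j * Q (k + 1 - j)|
        ≤ ∑ j ∈ Finset.Icc (m + 1) k, |r j * Q (k + 1 - j)| :=
          Finset.abs_sum_le_sum_abs _ _
      _ ≤ ∑ j ∈ Finset.Icc (m + 1) k, (-n j - 2) * Q (k + 1 - j) := by
          apply Finset.sum_le_sum
          intro j hj
          simp only [Finset.mem_Icc] at hj
          have hQnn : 0 ≤ Q (k + 1 - j) := (hA (k + 1 - j) (by omega)).1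
          have hrj := hr j (by omega) hj.2
          rw [abs_mul, abs_of_nonneg hQnn]
          exact mul_le_mul_of_nonneg_right hrj hQnn
      _ = Q (k - m + 1) - Q (k - m) - 1 := hBt
  -- split off the first term
  have hsplit : ∑ j ∈ Finset.Icc m k, r j * Q (k + 1 - j)
      = r m * Q (k + 1 - m) + ∑ j ∈ Finset.Icc (m + 1) k, r j * Q (k + 1 - j) := by
    rw [show Finset.Icc m k = insert m (Finset.Icc (m + 1) k) by
        ext x; simp only [Finset.mem_Icc, Finset.mem_insert]; omega,
      Finset.sum_insert (by simp only [Finset.mem_Icc]; omega)]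
  have hidx3 : k + 1 - m = k - m + 1 := by omega
  rw [hidx3] at hsplit
  rw [hsum] at hsplit
  obtain ⟨hQnn, hQmono⟩ := hA (k - m) (by omega)
  have heq : r m * Q (k - m + 1)
      = -(∑ j ∈ Finset.Icc (m + 1) k, r j * Q (k + 1 - j)) := by linarith
  have habs : |r m * Q (k - m + 1)| ≤ Q (k - m + 1) - Q (k - m) - 1 := by
    rw [heq, abs_neg]; exact htail
  rw [abs_mul, abs_of_nonneg (show (0:ℤ) ≤ Q (k - m + 1) by linarith)] at habs
  have hrm : r m = 0 := by
    by_contra h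
    have h1 : 1 ≤ |r m| := Int.one_le_abs h
    have := mul_le_mul_of_nonneg_right h1 (show (0:ℤ) ≤ Q (k - m + 1) by linarith)
    linarith
  refine ⟨hrm, ?_⟩
  rw [hrm] at heq
  simp only [zero_mul] at heq
  linarith
end

section
/- Let r_1, …, r_k be integers with |r_j| ≤ −n_j − 2 for all j. If q_{k+1} divides ∑_{j=1}^{k} r_j·q_{k+1−j}, then r_j = 0 for every j = 1, …, k. -/
/-- With `Q 0 = 0`, `Q 1 = 1` and `Q (j+1) = -Q (j-1) - n (k+1-j) * Q j` for
`j = 1, …, k` (entries `n_j ≤ -2`), and integers `r_j` with `|r_j| ≤ -n_j - 2`: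
if `Q (k+1)` divides `∑_{j=1}^{k} r_j * Q (k+1-j)`, then `r_j = 0` for all
`j = 1, …, k`. -/
theorem qseq_dvd_sum_all_coeffs_zero
    (k : ℕ) (hk : 1 ≤ k) (n : ℕ → ℤ) (hn : ∀ j, 1 ≤ j → j ≤ k → n j ≤ -2)
    (Q : ℕ → ℤ) (hQ0 : Q 0 = 0) (hQ1 : Q 1 = 1)
    (hQ : ∀ j, 1 ≤ j → j ≤ k → Q (j + 1) = -Q (j - 1) - n (k + 1 - j) * Q j)
    (r : ℕ → ℤ) (hr : ∀ j, 1 ≤ j → j ≤ k → |r j| ≤ -n j - 2)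
    (hdvd : Q (k + 1) ∣ ∑ j ∈ Finset.Icc 1 k, r j * Q (k + 1 - j)) :
    ∀ j, 1 ≤ j → j ≤ k → r j = 0 := by
  -- monotonicity and positivity
  have key : ∀ j, j ≤ k → 1 ≤ Q (j+1) - Q j ∧ 0 ≤ Q j := by
    intro j hj
    induction j with
    | zero => simp [hQ0, hQ1]
    | succ m ih =>
      obtain ⟨h1, h2⟩ := ih (Nat.le_of_succ_le hj)
      have hn' : n (k + 1 - (m+1)) ≤ -2 := hn _ (by omega) (by omega)
      have hrec := hQ (m+1) (by omega) hj
      simp only [Nat.add_sub_cancel] at hrec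
      constructor
      · have hid : Q (m+1+1) - Q (m+1) =
            (-n (k+1-(m+1)) - 2) * Q (m+1) + (Q (m+1) - Q m) := by
          rw [hrec]; ring
        nlinarith
      · linarith
  set T : ℕ → ℤ := fun m => ∑ j ∈ Finset.Icc 1 m, r (k+1-j) * Q j with hT
  have hTsucc : ∀ m, T (m+1) = T m + r (k+1-(m+1)) * Q (m+1) := by
    intro m
    simp only [hT]
    rw [Finset.sum_Icc_succ_top (by omega)]
  have bound : ∀ m, m ≤ k → |T m| ≤ Q (m+1) - Q m - 1 := by
    intro m hm
    induction m with
    | zero => simp [hT, hQ0, hQ1]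
    | succ m ih =>
      have ihm := ih (Nat.le_of_succ_le hm)
      have hr' : |r (k+1-(m+1))| ≤ -n (k+1-(m+1)) - 2 := by
        have h1 : k + 1 - (k+1-(m+1)) = m + 1 := by omega
        have := hr (k+1-(m+1)) (by omega) (by omega)
        exact this
      have hrec := hQ (m+1) (by omega) hm
      simp only [Nat.add_sub_cancel] at hrec
      have hQpos : 0 ≤ Q (m+1) := (key (m+1) hm).2
      have habs : |r (k+1-(m+1)) * Q (m+1)| = |r (k+1-(m+1))| * Q (m+1) := by
        rw [abs_mul, abs_of_nonneg hQpos]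
      calc |T (m+1)| = |T m + r (k+1-(m+1)) * Q (m+1)| := by rw [hTsucc]
        _ ≤ |T m| + |r (k+1-(m+1)) * Q (m+1)| := abs_add_le _ _
        _ ≤ (Q (m+1) - Q m - 1) + (-n (k+1-(m+1)) - 2) * Q (m+1) := by
            rw [habs]
            have := mul_le_mul_of_nonneg_right hr' hQpos
            linarith
        _ = Q (m+1+1) - Q (m+1) - 1 := by rw [hrec]; ring
  have zero : ∀ m, m ≤ k → T m = 0 → ∀ j, 1 ≤ j → j ≤ m → r (k+1-j) = 0 := by
    intro m
    induction m with
    | zero => intro _ _ j h1 h2; omega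
    | succ m ih =>
      intro hm hT0 j h1 h2
      have hQpos : 1 ≤ Q (m+1) := by
        have h0 := (key 0 (by omega)).1
        have := key m (Nat.le_of_succ_le hm)
        have h1' : ∀ i, i ≤ k → 0 ≤ Q i := fun i hi => (by
          rcases Nat.eq_zero_or_pos i with h | h
          · simp [h, hQ0]
          · exact (key i (by omega)).2)
        have := (key m (Nat.le_of_succ_le hm)).1
        have := (key m (Nat.le_of_succ_le hm)).2
        linarith
      have hb := bound m (Nat.le_of_succ_le hm)
      have heq : r (k+1-(m+1)) * Q (m+1) = -T m := by
        have := hTsucc m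
        linarith [hT0 ▸ this]
      have hrm : r (k+1-(m+1)) = 0 := by
        by_contra hne
        have hQm : 0 ≤ Q m := (key m (Nat.le_of_succ_le hm)).2
        have h1' : 1 ≤ |r (k+1-(m+1))| := Int.one_le_abs hne
        have : Q (m+1) ≤ |r (k+1-(m+1)) * Q (m+1)| := by
          rw [abs_mul, abs_of_nonneg (by linarith : (0:ℤ) ≤ Q (m+1))]
          nlinarith
        rw [heq, abs_neg] at this
        linarith
      have hTm : T m = 0 := by
        rw [hrm] at heq; simpa using heq.symm
      rcases Nat.lt_or_ge j (m+1) with h | h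
      · exact ih (Nat.le_of_succ_le hm) hTm j h1 (by omega)
      · have : j = m+1 := by omega
        rw [this]; exact hrm
  -- reindex hdvd
  have hre : ∑ j ∈ Finset.Icc 1 k, r j * Q (k + 1 - j) = T k := by
    simp only [hT]
    apply Finset.sum_nbij' (fun j => k+1-j) (fun j => k+1-j)
    · intro a ha; simp only [Finset.mem_Icc] at *; omega
    · intro a ha; simp only [Finset.mem_Icc] at *; omega
    · intro a ha; simp only [Finset.mem_Icc] at ha; omega
    · intro a ha; simp only [Finset.mem_Icc] at ha; omega
    · intro a ha
      simp only [Finset.mem_Icc] at ha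
      have : k + 1 - (k+1-a) = a := by omega
      rw [this]
  rw [hre] at hdvd
  have hQk1 : 0 < Q (k+1) := by
    have := (key k le_rfl).1
    have := (key k le_rfl).2
    linarith
  have hTk0 : T k = 0 := by
    apply Int.eq_zero_of_abs_lt_dvd hdvd
    have := bound k le_rfl
    have := (key k le_rfl).2
    have hk1 : 1 ≤ Q k := by
      have hkey := key (k-1) (by omega)
      have hkk : k - 1 + 1 = k := by omega
      rw [hkk] at hkey
      linarith [hkey.1, hkey.2]
    linarith
  intro j h1 h2
  have := zero k le_rfl hTk0 (k+1-j) (by omega) (by omega)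
  have hjj : k + 1 - (k+1-j) = j := by omega
  rwa [hjj] at this
end

section
/- Let r_1, …, r_k be integers with |r_j| ≤ −n_j − 2 and r_j ≡ n_j (mod 2) for all j. If at least one of the integers n_1, …, n_k is odd, then q_{k+1} does not divide ∑_{j=1}^{k} r_j·q_{k+1−j}; in particular this sum is a nonzero residue modulo q_{k+1}. -/
/-- With `Q 0 = 0`, `Q 1 = 1` and `Q (j+1) = -Q (j-1) - n (k+1-j) * Q j` for
`j = 1, …, k` (entries `n_j ≤ -2`), and integers `r_j` with `|r_j| ≤ -n_j - 2` and
`r_j ≡ n_j (mod 2)`: if at least one `n_j` is odd, then `Q (k+1)` does not divide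
`∑_{j=1}^{k} r_j * Q (k+1-j)`; in particular this sum is a nonzero residue
modulo `Q (k+1)`. -/
theorem qseq_sum_not_dvd_of_odd_entry
    (k : ℕ) (hk : 1 ≤ k) (n : ℕ → ℤ) (hn : ∀ j, 1 ≤ j → j ≤ k → n j ≤ -2)
    (Q : ℕ → ℤ) (hQ0 : Q 0 = 0) (hQ1 : Q 1 = 1)
    (hQ : ∀ j, 1 ≤ j → j ≤ k → Q (j + 1) = -Q (j - 1) - n (k + 1 - j) * Q j)
    (r : ℕ → ℤ) (hr : ∀ j, 1 ≤ j → j ≤ k → |r j| ≤ -n j - 2)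
    (hpar : ∀ j, 1 ≤ j → j ≤ k → r j ≡ n j [ZMOD 2])
    (hodd : ∃ j, 1 ≤ j ∧ j ≤ k ∧ Odd (n j)) :
    ¬ Q (k + 1) ∣ ∑ j ∈ Finset.Icc 1 k, r j * Q (k + 1 - j) := by
  intro hdvd
  -- monotonicity / positivity of Q
  have mono : ∀ j, j ≤ k → 0 ≤ Q j ∧ Q j + 1 ≤ Q (j + 1) := by
    intro j
    induction j with
    | zero => intro _; simp [hQ0, hQ1]
    | succ j ih =>
      intro hjk
      obtain ⟨h0, h1⟩ := ih (Nat.le_of_succ_le hjk)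
      have hrec := hQ (j + 1) (by omega) hjk
      simp only [Nat.add_sub_cancel] at hrec
      have hn' := hn (k + 1 - (j + 1)) (by omega) (by omega)
      constructor
      · omega
      · nlinarith
  -- key induction on prefixes
  have key : ∀ m, m ≤ k →
      |∑ i ∈ Finset.Icc 1 m, r (k + 1 - i) * Q i| ≤ Q (m + 1) - Q m - 1 ∧
      ((∑ i ∈ Finset.Icc 1 m, r (k + 1 - i) * Q i) = 0 →
        ∀ i, 1 ≤ i → i ≤ m → r (k + 1 - i) = 0) := by
    intro m
    induction m with
    | zero =>
      intro _
      constructor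
      · simp [hQ0, hQ1]
      · intro _ i hi1 hi0; omega
    | succ m ih =>
      intro hmk
      obtain ⟨ihb, ihz⟩ := ih (by omega)
      have hsum : ∑ i ∈ Finset.Icc 1 (m + 1), r (k + 1 - i) * Q i
          = (∑ i ∈ Finset.Icc 1 m, r (k + 1 - i) * Q i)
            + r (k + 1 - (m + 1)) * Q (m + 1) := by
        rw [Finset.sum_Icc_succ_top (by omega)]
      have hrec := hQ (m + 1) (by omega) hmk
      simp only [Nat.add_sub_cancel] at hrec
      have hr' := hr (k + 1 - (m + 1)) (by omega) (by omega)
      have hQm := mono m (by omega)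
      have hQm1 := mono (m + 1) hmk
      have habs : |r (k + 1 - (m + 1)) * Q (m + 1)|
          ≤ (-(n (k + 1 - (m + 1))) - 2) * Q (m + 1) := by
        rw [abs_mul, abs_of_nonneg (by omega : (0:ℤ) ≤ Q (m + 1))]
        exact mul_le_mul_of_nonneg_right hr' (by omega)
      have hexp : (-(n (k + 1 - (m + 1))) - 2) * Q (m + 1)
          = Q (m + 2) + Q m - 2 * Q (m + 1) := by linear_combination -hrec
      constructor
      · rw [hsum]
        have := abs_add_le (∑ i ∈ Finset.Icc 1 m, r (k + 1 - i) * Q i)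
          (r (k + 1 - (m + 1)) * Q (m + 1))
        have h22 : Q (m + 1 + 1) = Q (m + 2) := rfl
        rw [h22]
        linarith
      · intro h0
        have hr0 : r (k + 1 - (m + 1)) = 0 := by
          by_contra hne
          have h1 : 1 ≤ |r (k + 1 - (m + 1))| := Int.one_le_abs hne
          have h2 : Q (m + 1) ≤ |r (k + 1 - (m + 1))| * Q (m + 1) := by
            nlinarith
          have h3 : r (k + 1 - (m + 1)) * Q (m + 1)
              = -(∑ i ∈ Finset.Icc 1 m, r (k + 1 - i) * Q i) := by
            rw [hsum] at h0; linarith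
          have h4 : |r (k + 1 - (m + 1)) * Q (m + 1)|
              = |∑ i ∈ Finset.Icc 1 m, r (k + 1 - i) * Q i| := by
            rw [h3, abs_neg]
          rw [abs_mul, abs_of_nonneg (by omega : (0:ℤ) ≤ Q (m + 1))] at h4
          linarith [h4 ▸ ihb]
        have hS0 : (∑ i ∈ Finset.Icc 1 m, r (k + 1 - i) * Q i) = 0 := by
          rw [hsum, hr0] at h0; linarith
        intro i hi1 him1
        rcases Nat.lt_or_ge i (m + 1) with h | h
        · exact ihz hS0 i hi1 (by omega)
        · have : i = m + 1 := by omega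
          rw [this]; exact hr0
  -- reindex the sum
  have hreidx : (∑ j ∈ Finset.Icc 1 k, r j * Q (k + 1 - j))
      = ∑ i ∈ Finset.Icc 1 k, r (k + 1 - i) * Q i := by
    simp only [← Finset.Ico_add_one_right_eq_Icc, Finset.sum_Ico_eq_sum_range]
    rw [← Finset.sum_range_reflect]
    apply Finset.sum_congr rfl
    intro j hj
    simp only [Finset.mem_range] at hj
    congr 2 <;> omega
  obtain ⟨hb, hz⟩ := key k le_rfl
  rw [hreidx] at hdvd
  have hQk := mono k le_rfl
  have hS0 : (∑ i ∈ Finset.Icc 1 k, r (k + 1 - i) * Q i) = 0 :=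
    Int.eq_zero_of_abs_lt_dvd hdvd (by linarith)
  obtain ⟨j, hj1, hjk, hjo⟩ := hodd
  have := hz hS0 (k + 1 - j) (by omega) (by omega)
  have hjj : k + 1 - (k + 1 - j) = j := by omega
  rw [hjj] at this
  have hp := hpar j hj1 hjk
  rw [this] at hp
  have h2d : (2:ℤ) ∣ n j := by simpa using Int.modEq_iff_dvd.mp hp
  obtain ⟨c, hc⟩ := hjo
  obtain ⟨d, hd⟩ := h2d
  omega
end

section
/- There exists R₀ > 0 such that for all R ≥ R₀, all θ ∈ ℝ and all p ∈ M, one has (1/R)·β'(θ/R)·(1 − f(p)) + (1 − β(θ/R))·f(p) + β(θ/R) > 0. -/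
/-- Let `M` be a nonempty compact space, `f : M → ℝ` continuous and positive, and
`β : ℝ → ℝ` a `C¹` cutoff function: `0 ≤ β ≤ 1`, `β' ≥ 0`, `β = 0` on `(-∞, -1]`
and `β = 1` on `[1, ∞)`. Then there is `R₀ > 0` such that for all `R ≥ R₀`,
all `θ ∈ ℝ` and all `p ∈ M`,
`(1/R) * β'(θ/R) * (1 - f p) + (1 - β(θ/R)) * f p + β(θ/R) > 0`. -/
theorem ustilovsky_positivity
    (M : Type*) [TopologicalSpace M] [CompactSpace M] [Nonempty M]
    (f : M → ℝ) (hf : Continuous f) (hfpos : ∀ p, 0 < f p)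
    (β : ℝ → ℝ) (hβ : ContDiff ℝ 1 β)
    (hβ01 : ∀ t, 0 ≤ β t ∧ β t ≤ 1) (hβ' : ∀ t, 0 ≤ deriv β t)
    (hβ0 : ∀ t ≤ (-1 : ℝ), β t = 0) (hβ1 : ∀ t ≥ (1 : ℝ), β t = 1) :
    ∃ R₀ > (0 : ℝ), ∀ R ≥ R₀, ∀ θ : ℝ, ∀ p : M,
      0 < (1 / R) * deriv β (θ / R) * (1 - f p) +
            (1 - β (θ / R)) * f p + β (θ / R) := by
  -- min and max of f
  obtain ⟨pmin, -, hpmin⟩ := isCompact_univ.exists_isMinOn Set.univ_nonempty hf.continuousOn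
  obtain ⟨pmax, -, hpmax⟩ := isCompact_univ.exists_isMaxOn Set.univ_nonempty hf.continuousOn
  have hpmin : ∀ p, f pmin ≤ f p := fun p => hpmin (Set.mem_univ p)
  have hpmax : ∀ p, f p ≤ f pmax := fun p => hpmax (Set.mem_univ p)
  set m : ℝ := f pmin with hm
  have hmpos : 0 < m := hfpos pmin
  set ε : ℝ := min m 1 with hε
  have hεpos : 0 < ε := lt_min hmpos one_pos
  set B : ℝ := 1 + f pmax with hB
  have hB1 : (1 : ℝ) ≤ B := by
    have := (hfpos pmax).le
    simp [hB]; linarith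
  -- deriv β vanishes outside [-1,1]
  have hd0 : ∀ t : ℝ, t ∉ Set.Icc (-1 : ℝ) 1 → deriv β t = 0 := by
    intro t ht
    rw [Set.mem_Icc, not_and_or] at ht
    rcases ht with ht | ht
    · push_neg at ht
      have hev : β =ᶠ[nhds t] fun _ => (0 : ℝ) := by
        filter_upwards [Iio_mem_nhds ht] with s hs
        exact hβ0 s (le_of_lt hs)
      rw [hev.deriv_eq]; simp
    · push_neg at ht
      have hev : β =ᶠ[nhds t] fun _ => (1 : ℝ) := by
        filter_upwards [Ioi_mem_nhds ht] with s hs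
        exact hβ1 s (le_of_lt hs)
      rw [hev.deriv_eq]; simp
  -- bound deriv β on [-1,1]
  have hdc : Continuous (deriv β) := hβ.continuous_deriv le_rfl
  obtain ⟨t₀, ht₀, ht₀max⟩ := (isCompact_Icc (a := (-1:ℝ)) (b := 1)).exists_isMaxOn
    (Set.nonempty_Icc.2 (by norm_num)) hdc.continuousOn
  set C : ℝ := max (deriv β t₀) 0 with hC
  have hC0 : 0 ≤ C := le_max_right _ _
  have hdbound : ∀ t : ℝ, deriv β t ≤ C := by
    intro t
    by_cases ht : t ∈ Set.Icc (-1 : ℝ) 1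
    · exact le_trans (ht₀max ht) (le_max_left _ _)
    · rw [hd0 t ht]; exact hC0
  -- choose R₀
  refine ⟨1 + 2 * C * B / ε, by positivity, ?_⟩
  intro R hR θ p
  set s := θ / R
  have hRpos : 0 < R := lt_of_lt_of_le (by positivity) hR
  have h2 : (1 - β s) * f p + β s ≥ ε := by
    have h1 := (hβ01 s).1
    have h2 := (hβ01 s).2
    have h3 : m ≤ f p := hpmin p
    have h4 : ε ≤ m := min_le_left _ _
    have h5 : ε ≤ 1 := min_le_right _ _
    nlinarith
  have hfd : |1 - f p| ≤ B := by
    rw [abs_le]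
    have h3 := hfpos p
    have h4 := hpmax p
    constructor <;> [skip; skip] <;> simp [hB] <;> linarith
  have habs : |(1 / R) * deriv β s * (1 - f p)| ≤ (1 / R) * C * B := by
    rw [abs_mul, abs_mul]
    have h1 : |1 / R| = 1 / R := abs_of_pos (by positivity)
    have h2 : |deriv β s| = deriv β s := abs_of_nonneg (hβ' s)
    rw [h1, h2]
    have : deriv β s * |1 - f p| ≤ C * B := by
      apply mul_le_mul (hdbound s) hfd (abs_nonneg _) hC0
    rw [mul_assoc, mul_assoc]
    exact mul_le_mul_of_nonneg_left this (by positivity)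
  have hsmall : (1 / R) * C * B ≤ ε / 2 := by
    rw [div_mul_eq_mul_div, div_mul_eq_mul_div, div_le_div_iff₀ hRpos (by norm_num : (0:ℝ) < 2)]
    have h7 : 2 * C * B / ε + 1 ≤ R := by linarith
    have h8 : 2 * C * B / ε * ε = 2 * C * B := by field_simp
    nlinarith [mul_le_mul_of_nonneg_right h7 hεpos.le]
  have := abs_le.1 habs
  nlinarith
end

section
/- There exists R₀ > 0 such that for all R ≥ R₀ and all p ∈ M, the function θ ↦ e^{θ+R}·((1 − β(θ/R))·f(p) + β(θ/R)) has strictly positive derivative at every θ ∈ ℝ; in particular it is strictly monotone increasing on ℝ. -/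
/-!
Write `g(θ) = (1 - β(θ/R)) f(p) + β(θ/R)`. Since `β(θ/R) ∈ [0, 1]`, `g` is a convex combination
of `f(p)` and `1`, so `g ≥ m := min (min f) 1 > 0` by compactness. The derivative of
`e^{θ+R} g(θ)` is `e^{θ+R} (g(θ) + β'(θ/R) (1 - f(p)) / R)`, and the correction term is at most
`B K / R` in absolute value, where `B` bounds `|β'|` (continuous and supported in `[-1, 1]`) and
`K` bounds `|1 - f|`. Hence the derivative is positive as soon as `R > B K / m`.
-/

open Real Set

lemma hasCompactSupport_deriv_of_const_off_Icc {β : ℝ → ℝ} {a b c d : ℝ}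
    (ha : ∀ t ≤ a, β t = c) (hb : ∀ t ≥ b, β t = d) : HasCompactSupport (deriv β) := by
  refine HasCompactSupport.intro (isCompact_Icc : IsCompact (Icc a b)) fun t ht => ?_
  rcases lt_or_ge t a with hta | hat
  · have hconst : β =ᶠ[nhds t] fun _ => c :=
      Filter.eventually_of_mem (Iio_mem_nhds hta) fun s hs => ha s (le_of_lt hs)
    rw [hconst.deriv_eq, deriv_const]
  · have hbt : b < t := by
      by_contra! htb
      exact ht ⟨hat, htb⟩
    have hconst : β =ᶠ[nhds t] fun _ => d :=
      Filter.eventually_of_mem (Ioi_mem_nhds hbt) fun s hs => hb s (le_of_lt hs)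
    rw [hconst.deriv_eq, deriv_const]

lemma hasDerivAt_exp_mul_interpolation {β : ℝ → ℝ} (hβ : Differentiable ℝ β) (y R θ : ℝ) :
    HasDerivAt (fun θ : ℝ => exp (θ + R) * ((1 - β (θ / R)) * y + β (θ / R)))
      (exp (θ + R) * ((1 - β (θ / R)) * y + β (θ / R) + deriv β (θ / R) / R * (1 - y))) θ := by
  have hscale : HasDerivAt (fun θ : ℝ => θ / R) (1 / R) θ := (hasDerivAt_id θ).div_const R
  have hβR : HasDerivAt (fun θ : ℝ => β (θ / R)) (deriv β (θ / R) * (1 / R)) θ :=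
    (hβ (θ / R)).hasDerivAt.comp θ hscale
  have hexp : HasDerivAt (fun θ : ℝ => exp (θ + R)) (exp (θ + R)) θ := by
    simpa using ((hasDerivAt_id θ).add_const R).exp
  have hinterp : HasDerivAt (fun θ : ℝ => (1 - β (θ / R)) * y + β (θ / R))
      (-(deriv β (θ / R) * (1 / R)) * y + deriv β (θ / R) * (1 / R)) θ :=
    ((hβR.const_sub 1).mul_const y).add hβR
  exact (hexp.mul hinterp).congr_deriv (by ring)

lemma min_le_convex_combination_one {s y : ℝ} (hs0 : 0 ≤ s) (hs1 : s ≤ 1) :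
    min y 1 ≤ (1 - s) * y + s := by
  nlinarith [min_le_left y 1, min_le_right y 1]

lemma convex_combination_add_pos {s y d R m B K : ℝ} (hs0 : 0 ≤ s) (hs1 : s ≤ 1)
    (hm : m ≤ min y 1) (hd : |d| ≤ B) (hy : |1 - y| ≤ K) (hR : 0 < R) (hRm : B * K < R * m) :
    0 < (1 - s) * y + s + d / R * (1 - y) := by
  have hcorr : |d * (1 - y)| ≤ B * K := by
    rw [abs_mul]
    exact mul_le_mul hd hy (abs_nonneg _) ((abs_nonneg d).trans hd)
  have hcorr' : -m < d / R * (1 - y) := by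
    rw [div_mul_eq_mul_div, lt_div_iff₀ hR]
    linarith [neg_abs_le (d * (1 - y))]
  linarith [min_le_convex_combination_one (y := y) hs0 hs1]

theorem ustilovsky_interpolation_strict_mono_general
    (M : Type*) [TopologicalSpace M] [CompactSpace M] [Nonempty M]
    (f : M → ℝ) (hf : Continuous f) (hfpos : ∀ p, 0 < f p)
    (β : ℝ → ℝ) (hβ : ContDiff ℝ 1 β)
    (hβ01 : ∀ t, 0 ≤ β t ∧ β t ≤ 1)
    (hβ0 : ∀ t ≤ (-1 : ℝ), β t = 0) (hβ1 : ∀ t ≥ (1 : ℝ), β t = 1) :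
    ∃ R₀ > (0 : ℝ), ∀ R ≥ R₀, ∀ p : M,
      (∀ θ : ℝ,
          0 < deriv (fun θ : ℝ =>
            Real.exp (θ + R) * ((1 - β (θ / R)) * f p + β (θ / R))) θ) ∧
        StrictMono (fun θ : ℝ =>
          Real.exp (θ + R) * ((1 - β (θ / R)) * f p + β (θ / R))) := by
  obtain ⟨B, hB⟩ := (hβ.continuous_deriv le_rfl).bounded_above_of_compact_support
    (hasCompactSupport_deriv_of_const_off_Icc hβ0 hβ1)
  obtain ⟨K, hK⟩ := isCompact_univ.exists_bound_of_continuousOn (continuous_const.sub hf).continuousOn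
  obtain ⟨p₀, -, hp₀⟩ := isCompact_univ.exists_isMinOn univ_nonempty hf.continuousOn
  set m := min (f p₀) 1
  have hm : 0 < m := lt_min (hfpos p₀) one_pos
  have hB0 : 0 ≤ B := (norm_nonneg _).trans (hB 0)
  have hK0 : 0 ≤ K := (norm_nonneg _).trans (hK p₀ (mem_univ _))
  refine ⟨B * K / m + 1, by positivity, fun R hR p => ?_⟩
  have hRpos : 0 < R := by linarith [show 0 ≤ B * K / m by positivity]
  have hRm : B * K < R * m := by rw [← div_lt_iff₀ hm]; linarith
  have hpos : ∀ θ : ℝ,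
      0 < deriv (fun θ : ℝ => exp (θ + R) * ((1 - β (θ / R)) * f p + β (θ / R))) θ := fun θ => by
    rw [(hasDerivAt_exp_mul_interpolation (hβ.differentiable one_ne_zero) (f p) R θ).deriv]
    exact mul_pos (exp_pos _) (convex_combination_add_pos (hβ01 _).1 (hβ01 _).2
      (min_le_min_right 1 (hp₀ (mem_univ p))) (hB _) (hK p (mem_univ p)) hRpos hRm)
  exact ⟨hpos, strictMono_of_deriv_pos hpos⟩

/-- Let `M` be a nonempty compact space, `f : M → ℝ` continuous and positive, and
`β : ℝ → ℝ` a `C¹` cutoff function: `0 ≤ β ≤ 1`, `β' ≥ 0`, `β = 0` on `(-∞, -1]`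
and `β = 1` on `[1, ∞)`. Then there is `R₀ > 0` such that for all `R ≥ R₀` and
all `p ∈ M`, the function `θ ↦ exp (θ + R) * ((1 - β (θ/R)) * f p + β (θ/R))`
has strictly positive derivative everywhere; in particular it is strictly
monotone increasing on `ℝ`. -/
theorem ustilovsky_interpolation_strict_mono
    (M : Type*) [TopologicalSpace M] [CompactSpace M] [Nonempty M]
    (f : M → ℝ) (hf : Continuous f) (hfpos : ∀ p, 0 < f p)
    (β : ℝ → ℝ) (hβ : ContDiff ℝ 1 β)
    (hβ01 : ∀ t, 0 ≤ β t ∧ β t ≤ 1) (hβ' : ∀ t, 0 ≤ deriv β t)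
    (hβ0 : ∀ t ≤ (-1 : ℝ), β t = 0) (hβ1 : ∀ t ≥ (1 : ℝ), β t = 1) :
    ∃ R₀ > (0 : ℝ), ∀ R ≥ R₀, ∀ p : M,
      (∀ θ : ℝ,
          0 < deriv (fun θ : ℝ =>
            Real.exp (θ + R) * ((1 - β (θ / R)) * f p + β (θ / R))) θ) ∧
        StrictMono (fun θ : ℝ =>
          Real.exp (θ + R) * ((1 - β (θ / R)) * f p + β (θ / R))) :=
  ustilovsky_interpolation_strict_mono_general M f hf hfpos β hβ hβ01 hβ0 hβ1
end
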